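/- arXiv:2601.13256 — 4 statements merged into one kernel-verified Lean document; each statement's English description precedes it below -/
import Mathlib

section
/- Let d ≥ 1, c : {1,…,d} → ℝ, f ∈ ℝ, 1 ≤ b ≤ d, and let I and J be independent uniformly distributed random subsets of {1,…,d} of cardinality b. Then the doubly-sampled SDGD loss is an unbiased estimator of the true squared residual: E[((d/b) Σ_{i∈I} c_i − f) · ((d/b) Σ_{j∈J} c_j − f)] = (Σ_{i=1}^d c_i − f)². -/
/-! Every element of an `n`-set lies in exactly `(n - 1).choose (b - 1)` of its `b`-subsets,
and `n * (n - 1).choose (b - 1) = n.choose b * b`; hence the rescaled subset sum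
`(n / b) * ∑_{i ∈ I} c i` averages to `∑ c i` over all `b`-subsets `I`. Since `I` and `J` are
drawn independently, the double average of the product factors as the product of the two
averages. -/

open Finset

section Subsets

variable {α : Type*} [DecidableEq α]

-- `I ↦ I.erase a` is a bijection onto the `k`-subsets of `s.erase a`, with inverse `insert a`.
theorem card_filter_mem_powersetCard_succ {s : Finset α} {a : α} (ha : a ∈ s) (k : ℕ) :
    #{I ∈ powersetCard (k + 1) s | a ∈ I} = (#s - 1).choose k := by
  rw [← card_erase_of_mem ha, ← card_powersetCard]
  refine card_nbij' (·.erase a) (insert a) ?_ ?_ ?_ ?_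
  · intro I hI
    simp only [mem_coe, mem_filter, mem_powersetCard] at hI ⊢
    exact ⟨erase_subset_erase a hI.1.1, by rw [card_erase_of_mem hI.2, hI.1.2, Nat.add_sub_cancel]⟩
  · intro J hJ
    simp only [mem_coe, mem_powersetCard] at hJ
    have haJ : a ∉ J := fun h => (mem_erase.mp (hJ.1 h)).1 rfl
    simp only [mem_coe, mem_filter, mem_powersetCard, mem_insert_self, and_true]
    exact ⟨insert_subset ha (hJ.1.trans (erase_subset a s)), by rw [card_insert_of_notMem haJ, hJ.2]⟩
  · intro I hI
    exact insert_erase (mem_filter.mp hI).2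
  · intro J hJ
    exact erase_insert fun h => (mem_erase.mp ((mem_powersetCard.mp hJ).1 h)).1 rfl

theorem sum_powersetCard_succ_sum {M : Type*} [AddCommMonoid M] (s : Finset α) (k : ℕ)
    (c : α → M) :
    ∑ I ∈ powersetCard (k + 1) s, ∑ i ∈ I, c i = (#s - 1).choose k • ∑ i ∈ s, c i := by
  rw [sum_comm' (s' := fun i => {I ∈ powersetCard (k + 1) s | i ∈ I}) (t' := s)]
  · rw [smul_sum]
    refine sum_congr rfl fun i hi => ?_
    rw [sum_const, card_filter_mem_powersetCard_succ hi]
  · intro I i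
    simp only [mem_filter, mem_powersetCard]
    exact ⟨fun ⟨⟨hIs, hIk⟩, hi⟩ => ⟨⟨⟨hIs, hIk⟩, hi⟩, hIs hi⟩, fun ⟨h, _⟩ => h⟩

theorem sum_powersetCard_card_div_mul_sum {K : Type*} [Field K] [CharZero K] (s : Finset α)
    {b : ℕ} (hb : 1 ≤ b) (c : α → K) :
    ∑ I ∈ powersetCard b s, (#s / b : K) * ∑ i ∈ I, c i = (#s).choose b * ∑ i ∈ s, c i := by
  obtain ⟨k, rfl⟩ := Nat.exists_eq_add_of_le' hb
  have hcount : (#s : K) * (#s - 1).choose k = (#s).choose (k + 1) * (k + 1) := by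
    rcases Nat.eq_zero_or_eq_succ_pred #s with h | h
    · simp [h]
    · rw [h]
      exact_mod_cast Nat.add_one_mul_choose_eq _ k
  rw [← mul_sum, sum_powersetCard_succ_sum, nsmul_eq_mul, ← mul_assoc, div_mul_eq_mul_div,
    hcount]
  push_cast
  field_simp

end Subsets

theorem sdgd_double_sampling_unbiased_general {d b : ℕ} (hb : 1 ≤ b) (hbd : b ≤ d)
    (c : Fin d → ℝ) (f : ℝ) :
    (1 / (Nat.choose d b : ℝ)) ^ 2 *
      ∑ I ∈ Finset.powersetCard b (Finset.univ : Finset (Fin d)),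
        ∑ J ∈ Finset.powersetCard b (Finset.univ : Finset (Fin d)),
          (((d : ℝ) / (b : ℝ)) * (∑ i ∈ I, c i) - f) *
            (((d : ℝ) / (b : ℝ)) * (∑ j ∈ J, c j) - f)
      = ((∑ i, c i) - f) ^ 2 := by
  have hchoose : (d.choose b : ℝ) ≠ 0 := by exact_mod_cast (Nat.choose_pos hbd).ne'
  have hmean : ∑ I ∈ powersetCard b (univ : Finset (Fin d)), ((d / b : ℝ) * ∑ i ∈ I, c i - f)
      = d.choose b * ((∑ i, c i) - f) := by
    have hscaled := sum_powersetCard_card_div_mul_sum (univ : Finset (Fin d)) hb c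
    rw [card_univ, Fintype.card_fin] at hscaled
    rw [sum_sub_distrib, hscaled, sum_const, card_powersetCard, card_univ, Fintype.card_fin,
      nsmul_eq_mul]
    ring
  rw [← sum_mul_sum, hmean]
  field_simp

/-- Unbiasedness of the doubly-sampled SDGD loss: if `I` and `J` are independent uniformly
distributed random subsets of `{1,…,d}` of cardinality `b`, then
`E[((d/b) Σ_{i∈I} c_i − f)((d/b) Σ_{j∈J} c_j − f)] = (Σ_{i=1}^d c_i − f)²`. -/
theorem sdgd_double_sampling_unbiased {d b : ℕ} (hd : 1 ≤ d) (hb : 1 ≤ b) (hbd : b ≤ d)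
    (c : Fin d → ℝ) (f : ℝ) :
    (1 / (Nat.choose d b : ℝ)) ^ 2 *
      ∑ I ∈ Finset.powersetCard b (Finset.univ : Finset (Fin d)),
        ∑ J ∈ Finset.powersetCard b (Finset.univ : Finset (Fin d)),
          (((d : ℝ) / (b : ℝ)) * (∑ i ∈ I, c i) - f) *
            (((d : ℝ) / (b : ℝ)) * (∑ j ∈ J, c j) - f)
      = ((∑ i, c i) - f) ^ 2 :=
  sdgd_double_sampling_unbiased_general hb hbd c f
end

section
/- Let d ≥ 1, let A be a d×d real matrix, and let v = (v_1,…,v_d) be a random vector with i.i.d. entries satisfying E[v_1] = 0, E[v_1²] = 1, and κ := E[v_1⁴] < ∞. Then Var(vᵀ A v) = (κ − 1) Σ_{i=1}^d A_{ii}² + Σ_{i≠j} A_{ij}(A_{ij} + A_{ji}). Moreover κ ≥ 1 always holds, with equality if and only if v_1² = 1 almost surely; consequently, among all distributions of i.i.d. zero-mean unit-variance entries, the Rademacher distribution minimizes the variance of the Hutchinson trace estimator vᵀ A v. -/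
/-!
Expanding `(vᵀ A v)²` reduces the variance to the fourth moments `E[vᵢ vⱼ vₖ vₗ]`. By
independence and centring such a moment vanishes as soon as one index occurs exactly once, so
only `i = j = k = l` (giving `κ`) and the three pairings of two distinct indices (giving `1`)
survive:
`E[vᵢ vⱼ vₖ vₗ] = δᵢⱼ δₖₗ + δᵢₖ δⱼₗ + δᵢₗ δⱼₖ + (κ - 3) δᵢⱼₖₗ`. Summing against `Aᵢⱼ Aₖₗ` gives the
variance. Finally `κ - 1 = E[(v₁² - 1)²]`, which is nonnegative and vanishes exactly when
`v₁² = 1` almost surely, so the term `(κ - 1) ∑ Aᵢᵢ²` is smallest for Rademacher entries.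
-/

open MeasureTheory ProbabilityTheory

namespace ProbabilityTheory

variable {ι Ω : Type*} {mΩ : MeasurableSpace Ω}

theorem memLp_sq_of_integrable_pow_four {μ : Measure Ω} {Y : Ω → ℝ}
    (hY : AEStronglyMeasurable Y μ) (hY4 : Integrable (fun ω => Y ω ^ 4) μ) :
    MemLp (fun ω => Y ω ^ 2) 2 μ :=
  (memLp_two_iff_integrable_sq (hY.pow 2)).2 <| by simpa only [Pi.pow_apply, ← pow_mul] using hY4

structure IsHutchinsonProbe (X : ι → Ω → ℝ) (κ : ℝ) (μ : Measure Ω) : Prop where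
  measurable : ∀ i, Measurable (X i)
  indep : iIndepFun X μ
  integrable_pow_four : ∀ i, Integrable (fun ω => X i ω ^ 4) μ
  integral_eq_zero : ∀ i, ∫ ω, X i ω ∂μ = 0
  integral_sq : ∀ i, ∫ ω, X i ω ^ 2 ∂μ = 1
  integral_pow_four : ∀ i, ∫ ω, X i ω ^ 4 ∂μ = κ

namespace IsHutchinsonProbe

variable {X : ι → Ω → ℝ} {κ : ℝ} {μ : Measure Ω}

theorem memLp_sq (hX : IsHutchinsonProbe X κ μ) (i : ι) : MemLp (fun ω => X i ω ^ 2) 2 μ :=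
  memLp_sq_of_integrable_pow_four (hX.measurable i).aestronglyMeasurable (hX.integrable_pow_four i)

theorem memLp_mul (hX : IsHutchinsonProbe X κ μ) (i j : ι) :
    MemLp (fun ω => X i ω * X j ω) 2 μ := by
  rw [memLp_two_iff_integrable_sq (by have := hX.measurable; fun_prop)]
  convert (hX.memLp_sq i).integrable_mul (hX.memLp_sq j) using 1
  ext ω
  simp only [Pi.mul_apply, mul_pow]

theorem integrable_mul (hX : IsHutchinsonProbe X κ μ) (i j : ι) :
    Integrable (fun ω => X i ω * X j ω) μ :=
  have := hX.indep.isProbabilityMeasure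
  (hX.memLp_mul i j).integrable one_le_two

theorem integrable_mul_mul_mul (hX : IsHutchinsonProbe X κ μ) (i j k l : ι) :
    Integrable (fun ω => X i ω * X j ω * X k ω * X l ω) μ := by
  convert (hX.memLp_mul i j).integrable_mul (hX.memLp_mul k l) using 1
  ext ω
  simp only [Pi.mul_apply, mul_assoc]

theorem integral_mul [DecidableEq ι] (hX : IsHutchinsonProbe X κ μ) (i j : ι) :
    ∫ ω, X i ω * X j ω ∂μ = if i = j then 1 else 0 := by
  split_ifs with hij
  · subst hij; simpa only [sq] using hX.integral_sq i
  · have := (hX.indep.indepFun hij).integral_mul_eq_mul_integral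
      (hX.measurable i).aestronglyMeasurable (hX.measurable j).aestronglyMeasurable
    simpa [hX.integral_eq_zero i] using this

theorem integral_sq_mul_sq (hX : IsHutchinsonProbe X κ μ) {i j : ι} (hij : i ≠ j) :
    ∫ ω, X i ω ^ 2 * X j ω ^ 2 ∂μ = 1 := by
  have hind := (hX.indep.indepFun hij).comp (measurable_id.pow_const 2)
    (measurable_id.pow_const 2)
  have := hind.integral_mul_eq_mul_integral ((hX.measurable i).pow_const 2).aestronglyMeasurable
    ((hX.measurable j).pow_const 2).aestronglyMeasurable
  simpa [Function.comp_def, hX.integral_sq] using this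

theorem integral_mul_mul_mul_eq_zero_of_notMem [DecidableEq ι] (hX : IsHutchinsonProbe X κ μ)
    {i j k l : ι} (hi : i ∉ ({j, k, l} : Finset ι)) :
    ∫ ω, X i ω * X j ω * X k ω * X l ω ∂μ = 0 := by
  have hφ : Measurable fun x : ({i} : Finset ι) → ℝ => x ⟨i, by simp⟩ := measurable_pi_apply _
  have hψ : Measurable fun y : ({j, k, l} : Finset ι) → ℝ =>
      y ⟨j, by simp⟩ * y ⟨k, by simp⟩ * y ⟨l, by simp⟩ := by fun_prop
  have hind := (hX.indep.indepFun_finset {i} {j, k, l}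
    (Finset.disjoint_singleton_left.2 hi) hX.measurable).comp hφ hψ
  have := hind.integral_mul_eq_mul_integral (hX.measurable i).aestronglyMeasurable
    (((hX.measurable j).mul (hX.measurable k)).mul (hX.measurable l)).aestronglyMeasurable
  simpa [Function.comp_def, hX.integral_eq_zero, mul_assoc] using this

theorem integral_mul_mul_mul_eq_zero [DecidableEq ι] (hX : IsHutchinsonProbe X κ μ)
    {i j k l : ι} (h : i ∉ ({j, k, l} : Finset ι) ∨ j ∉ ({i, k, l} : Finset ι) ∨
      k ∉ ({i, j, l} : Finset ι) ∨ l ∉ ({i, j, k} : Finset ι)) :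
    ∫ ω, X i ω * X j ω * X k ω * X l ω ∂μ = 0 := by
  rcases h with h | h | h | h <;>
    rw [← hX.integral_mul_mul_mul_eq_zero_of_notMem h] <;> congr 1 <;> ext ω <;> ring

theorem integral_mul_mul_mul [DecidableEq ι] (hX : IsHutchinsonProbe X κ μ) (i j k l : ι) :
    ∫ ω, X i ω * X j ω * X k ω * X l ω ∂μ =
      (if i = j ∧ k = l then 1 else 0) + (if i = k ∧ j = l then 1 else 0) +
        (if i = l ∧ j = k then 1 else 0) + if i = j ∧ i = k ∧ i = l then κ - 3 else 0 := by
  have sq_mul_sq {a b : ι} (hab : a ≠ b) (f : Ω → ℝ) (hf : ∀ ω, f ω = X a ω ^ 2 * X b ω ^ 2) :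
      ∫ ω, f ω ∂μ = 1 := by
    simp only [hf, hX.integral_sq_mul_sq hab]
  rcases eq_or_ne i j with rfl | hij
  · rcases eq_or_ne i k with rfl | hik
    · rcases eq_or_ne i l with rfl | hil
      · have h4 : ∀ ω, X i ω * X i ω * X i ω * X i ω = X i ω ^ 4 := fun ω => by ring
        simp only [h4, hX.integral_pow_four, and_self, if_true]
        ring
      · rw [hX.integral_mul_mul_mul_eq_zero (by simp [hil, hil.symm])]
        simp [hil]
    · rcases eq_or_ne k l with rfl | hkl
      · rw [sq_mul_sq hik _ fun ω => by ring]
        simp [hik]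
      · rw [hX.integral_mul_mul_mul_eq_zero (by simp [hik, hik.symm, hkl, hkl.symm])]
        simp [hik, hkl]
  · rcases eq_or_ne i k with rfl | hik
    · rcases eq_or_ne j l with rfl | hjl
      · rw [sq_mul_sq hij _ fun ω => by ring]
        simp [hij]
      · rw [hX.integral_mul_mul_mul_eq_zero (by simp [hij, hij.symm, hjl, hjl.symm])]
        simp [hij, hij.symm, hjl]
    · rcases eq_or_ne i l with rfl | hil
      · rcases eq_or_ne j k with rfl | hjk
        · rw [sq_mul_sq hij _ fun ω => by ring]
          simp [hij]
        · rw [hX.integral_mul_mul_mul_eq_zero (by simp [hij, hij.symm, hjk, hjk.symm])]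
          simp [hij, hij.symm, hjk]
      · rw [hX.integral_mul_mul_mul_eq_zero (by simp [hij, hik, hil])]
        simp [hij, hik, hil]

theorem of_identDistrib {Y : Ω → ℝ} (hmeas : ∀ i, Measurable (X i)) (hindep : iIndepFun X μ)
    (hident : ∀ i, IdentDistrib (X i) Y μ μ) (hY4 : Integrable (fun ω => Y ω ^ 4) μ)
    (hY1 : ∫ ω, Y ω ∂μ = 0) (hY2 : ∫ ω, Y ω ^ 2 ∂μ = 1) :
    IsHutchinsonProbe X (∫ ω, Y ω ^ 4 ∂μ) μ where
  measurable := hmeas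
  indep := hindep
  integrable_pow_four i := (hident i).pow.integrable_iff.2 hY4
  integral_eq_zero i := (hident i).integral_eq.trans hY1
  integral_sq i := (hident i).pow.integral_eq.trans hY2
  integral_pow_four i := (hident i).pow.integral_eq

variable [Fintype ι]

theorem integral_quadForm (hX : IsHutchinsonProbe X κ μ) (A : Matrix ι ι ℝ) :
    ∫ ω, ∑ i, ∑ j, X i ω * A i j * X j ω ∂μ = A.trace := by
  classical
  have hint (i j : ι) : Integrable (fun ω => X i ω * A i j * X j ω) μ := by
    simpa only [mul_right_comm] using (hX.integrable_mul i j).mul_const (A i j)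
  simp_rw [integral_finsetSum _ fun i _ => integrable_finsetSum _ fun j _ => hint i j,
    integral_finsetSum _ fun j _ => hint _ j, mul_right_comm _ (A _ _), integral_mul_const,
    hX.integral_mul]
  simp [Matrix.trace]

theorem integral_quadForm_sq (hX : IsHutchinsonProbe X κ μ) (A : Matrix ι ι ℝ) :
    ∫ ω, (∑ i, ∑ j, X i ω * A i j * X j ω) ^ 2 ∂μ =
      A.trace ^ 2 + ∑ i, ∑ j, A i j * (A i j + A j i) + (κ - 3) * ∑ i, A i i ^ 2 := by
  classical
  have hexp (ω : Ω) : (∑ i, ∑ j, X i ω * A i j * X j ω) ^ 2 =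
      ∑ i, ∑ j, ∑ k, ∑ l, A i j * A k l * (X i ω * X j ω * X k ω * X l ω) := by
    simp only [sq, Finset.sum_mul, Finset.mul_sum]
    refine Finset.sum_congr rfl fun i _ => Finset.sum_congr rfl fun j _ => ?_
    refine Finset.sum_congr rfl fun k _ => Finset.sum_congr rfl fun l _ => ?_
    ring
  have hint (i j k l : ι) :
      Integrable (fun ω => A i j * A k l * (X i ω * X j ω * X k ω * X l ω)) μ :=
    (hX.integrable_mul_mul_mul i j k l).const_mul _
  simp_rw [hexp, integral_finsetSum _ fun i _ => integrable_finsetSum _ fun j _ =>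
      integrable_finsetSum _ fun k _ => integrable_finsetSum _ fun l _ => hint i j k l,
    integral_finsetSum _ fun j _ => integrable_finsetSum _ fun k _ =>
      integrable_finsetSum _ fun l _ => hint _ j k l,
    integral_finsetSum _ fun k _ => integrable_finsetSum _ fun l _ => hint _ _ k l,
    integral_finsetSum _ fun l _ => hint _ _ _ l, integral_const_mul, hX.integral_mul_mul_mul]
  rw [Matrix.trace, sq, Finset.sum_mul_sum]
  simp only [ite_and, mul_add, mul_ite, mul_one, mul_zero, Finset.sum_add_distrib,
    Finset.sum_ite_irrel, Finset.sum_ite_eq, Finset.mem_univ, if_true, Finset.sum_const_zero,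
    Matrix.diag_apply, sq, ← Finset.sum_mul]
  ring

theorem integral_quadForm_sq_sub_sq_integral [DecidableEq ι] (hX : IsHutchinsonProbe X κ μ)
    (A : Matrix ι ι ℝ) :
    (∫ ω, (∑ i, ∑ j, X i ω * A i j * X j ω) ^ 2 ∂μ) -
        (∫ ω, ∑ i, ∑ j, X i ω * A i j * X j ω ∂μ) ^ 2 =
      (κ - 1) * ∑ i, A i i ^ 2 + ∑ i, ∑ j ∈ Finset.univ.erase i, A i j * (A i j + A j i) := by
  have hoff (i : ι) : ∑ j ∈ Finset.univ.erase i, A i j * (A i j + A j i) =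
      ∑ j, A i j * (A i j + A j i) - 2 * A i i ^ 2 := by
    rw [Finset.sum_erase_eq_sub (Finset.mem_univ i)]
    ring
  rw [hX.integral_quadForm_sq, hX.integral_quadForm, Finset.sum_congr rfl fun i _ => hoff i,
    Finset.sum_sub_distrib, ← Finset.mul_sum]
  ring

end IsHutchinsonProbe

section FourthMoment

variable {Y : Ω → ℝ} {μ : Measure Ω} [IsProbabilityMeasure μ]

theorem integral_sq_sub_one_sq (hY : AEStronglyMeasurable Y μ)
    (hY4 : Integrable (fun ω => Y ω ^ 4) μ) (hY2 : ∫ ω, Y ω ^ 2 ∂μ = 1) :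
    ∫ ω, (Y ω ^ 2 - 1) ^ 2 ∂μ = ∫ ω, Y ω ^ 4 ∂μ - 1 := by
  have hsq := (memLp_sq_of_integrable_pow_four hY hY4).integrable one_le_two
  have hexp (ω : Ω) : (Y ω ^ 2 - 1) ^ 2 = Y ω ^ 4 - 2 * Y ω ^ 2 + 1 := by ring
  have hint : Integrable (fun ω => Y ω ^ 4 - 2 * Y ω ^ 2) μ := hY4.sub (hsq.const_mul 2)
  simp only [hexp]
  rw [integral_add hint (integrable_const 1),
    integral_sub hY4 (hsq.const_mul 2), integral_const_mul, hY2]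
  simp only [mul_one, integral_const, probReal_univ, smul_eq_mul]
  ring

theorem one_le_integral_pow_four (hY : AEStronglyMeasurable Y μ)
    (hY4 : Integrable (fun ω => Y ω ^ 4) μ) (hY2 : ∫ ω, Y ω ^ 2 ∂μ = 1) :
    1 ≤ ∫ ω, Y ω ^ 4 ∂μ := by
  have := integral_nonneg (μ := μ) (f := fun ω => (Y ω ^ 2 - 1) ^ 2) fun ω => sq_nonneg _
  rw [integral_sq_sub_one_sq hY hY4 hY2] at this
  linarith

theorem integral_pow_four_eq_one_iff (hY : AEStronglyMeasurable Y μ)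
    (hY4 : Integrable (fun ω => Y ω ^ 4) μ) (hY2 : ∫ ω, Y ω ^ 2 ∂μ = 1) :
    ∫ ω, Y ω ^ 4 ∂μ = 1 ↔ (fun ω => Y ω ^ 2) =ᵐ[μ] fun _ => (1 : ℝ) := by
  have hint : Integrable (fun ω => (Y ω ^ 2 - 1) ^ 2) μ :=
    ((memLp_sq_of_integrable_pow_four hY hY4).sub (memLp_const 1)).integrable_sq
  rw [← sub_eq_zero, ← integral_sq_sub_one_sq hY hY4 hY2,
    integral_eq_zero_iff_of_nonneg (fun ω => sq_nonneg _) hint]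
  simp [Filter.EventuallyEq, sub_eq_zero]

end FourthMoment

end ProbabilityTheory

/-- Variance of the Hutchinson trace estimator with i.i.d. zero-mean unit-variance entries:
`Var(vᵀ A v) = (κ − 1) Σ_i A_{ii}² + Σ_{i≠j} A_{ij}(A_{ij} + A_{ji})` with `κ = E[v_1⁴]`.
Moreover `κ ≥ 1`, with equality iff `v_1² = 1` a.s.; consequently the Rademacher
distribution minimizes the variance: `Var(vᵀ A v) ≥ Σ_{i≠j} A_{ij}(A_{ij} + A_{ji})`. -/
theorem hutchinson_variance_general {d : ℕ} (hd : 1 ≤ d) (A : Matrix (Fin d) (Fin d) ℝ)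
    {Ω : Type*} [MeasureSpace Ω] [IsProbabilityMeasure (ℙ : Measure Ω)]
    (v : Ω → Fin d → ℝ)
    (hmeas : ∀ i, Measurable fun ω => v ω i)
    (hindep : iIndepFun (fun i ω => v ω i) ℙ)
    (hident : ∀ i : Fin d,
      Measure.map (fun ω => v ω i) ℙ = Measure.map (fun ω => v ω ⟨0, hd⟩) ℙ)
    (hL4 : Integrable fun ω => (v ω ⟨0, hd⟩) ^ 4)
    (hmean : (∫ ω, v ω ⟨0, hd⟩) = 0)
    (hvar : (∫ ω, (v ω ⟨0, hd⟩) ^ 2) = 1)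
    (κ : ℝ) (hκ : κ = ∫ ω, (v ω ⟨0, hd⟩) ^ 4) :
    let Q : Ω → ℝ := fun ω => ∑ i, ∑ j, v ω i * A i j * v ω j
    let Var : ℝ := (∫ ω, (Q ω) ^ 2) - (∫ ω, Q ω) ^ 2
    Var = (κ - 1) * (∑ i, (A i i) ^ 2)
            + ∑ i, ∑ j ∈ Finset.univ.erase i, A i j * (A i j + A j i) ∧
    1 ≤ κ ∧
    (κ = 1 ↔ (fun ω => (v ω ⟨0, hd⟩) ^ 2) =ᵐ[ℙ] fun _ => (1 : ℝ)) ∧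
    (∑ i, ∑ j ∈ Finset.univ.erase i, A i j * (A i j + A j i)) ≤ Var := by
  intro Q Var
  subst hκ
  have hX : IsHutchinsonProbe (fun i ω => v ω i) _ ℙ :=
    .of_identDistrib hmeas hindep
      (fun i => ⟨(hmeas i).aemeasurable, (hmeas _).aemeasurable, hident i⟩) hL4 hmean hvar
  have hVar : Var = _ := hX.integral_quadForm_sq_sub_sq_integral A
  have hv0 := (hmeas ⟨0, hd⟩).aestronglyMeasurable (μ := ℙ)
  have hκ1 := one_le_integral_pow_four hv0 hL4 hvar
  refine ⟨hVar, hκ1, integral_pow_four_eq_one_iff hv0 hL4 hvar, ?_⟩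
  have hdiag : 0 ≤ ∑ i, A i i ^ 2 := Finset.sum_nonneg fun i _ => sq_nonneg _
  exact hVar ▸ le_add_of_nonneg_left (mul_nonneg (sub_nonneg.2 hκ1) hdiag)
end

section
/- Let d ≥ 2, c : {1,…,d} → ℝ, 1 ≤ b ≤ d, and let I be a uniformly distributed random subset of {1,…,d} of cardinality b. Let X = (d/b) Σ_{i∈I} c_i, let c̄ = (1/d) Σ_{i=1}^d c_i, and let s² = (1/d) Σ_{i=1}^d (c_i − c̄)². Then Var(X) = (d²/b) · ((d − b)/(d − 1)) · s². In particular, when c_i = A_{ii} are the diagonal entries of a matrix A, the variance of the SDGD trace estimator X depends only on the spread of the diagonal entries of A, and vanishes when b = d or when all diagonal entries are equal. -/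
/-!
Double counting over the `b`-subsets of a `d`-set: a given element lies in `C(d,b)·b/d` of them
and two given distinct elements in `C(d,b)·b(b-1)/(d(d-1))`. This makes the first two moments of
`∑ i ∈ I, c i` explicit in `∑ c i` and `∑ c i ^ 2`, and the variance formula is then algebra.
-/

open Finset

namespace Finset

theorem sum_sub_mean_sq {ι K : Type*} [Field K] (s : Finset ι) (f : ι → K) :
    ∑ i ∈ s, (f i - (∑ j ∈ s, f j) / #s) ^ 2 = ∑ i ∈ s, f i ^ 2 - (∑ i ∈ s, f i) ^ 2 / #s := by
  rcases eq_or_ne (#s : K) 0 with hs | hs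
  · simp [hs]
  · simp only [sub_sq, sum_add_distrib, sum_sub_distrib, sum_const, nsmul_eq_mul, ← sum_mul,
      ← mul_sum]
    field_simp
    ring

variable {ι : Type*} [DecidableEq ι]

/-- Multiplied out by descending factorials, the count also holds when `n < #s`: both sides
vanish. -/
theorem descFactorial_mul_card_filter_powersetCard_subset {s t : Finset ι} (hst : s ⊆ t)
    (n : ℕ) :
    (#t).descFactorial #s * #{I ∈ t.powersetCard n | s ⊆ I} =
      (#t).choose n * n.descFactorial #s := by
  by_cases hsn : #s ≤ n
  · rw [card_filter_powersetCard_subset s t n hst hsn, Nat.descFactorial_eq_factorial_mul_choose,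
      Nat.descFactorial_eq_factorial_mul_choose, mul_assoc, ← Nat.choose_mul hsn]
    ring
  · have hempty : #{I ∈ t.powersetCard n | s ⊆ I} = 0 := by
      rw [card_eq_zero, filter_eq_empty_iff]
      exact fun I hI hsI => hsn ((card_le_card hsI).trans (mem_powersetCard.1 hI).2.le)
    rw [hempty, Nat.descFactorial_eq_zero_iff_lt.2 (not_le.1 hsn), mul_zero, mul_zero]

theorem sum_sum_eq_sum_sum_filter_mem {M : Type*} [AddCommMonoid M] {𝒜 : Finset (Finset ι)}
    {t : Finset ι} (h𝒜 : ∀ I ∈ 𝒜, I ⊆ t) (g : Finset ι → ι → M) :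
    ∑ I ∈ 𝒜, ∑ i ∈ I, g I i = ∑ i ∈ t, ∑ I ∈ 𝒜 with i ∈ I, g I i :=
  sum_comm' fun I i => by
    simp only [mem_filter]
    exact ⟨fun hIi => ⟨hIi, h𝒜 I hIi.1 hIi.2⟩, fun hIi => hIi.1⟩

variable {R : Type*}

theorem card_mul_card_filter_mem_powersetCard [CommSemiring R] {t : Finset ι} {i : ι}
    (hi : i ∈ t) (n : ℕ) :
    (#t : R) * #{I ∈ t.powersetCard n | i ∈ I} = (#t).choose n * n := by
  have h := descFactorial_mul_card_filter_powersetCard_subset (singleton_subset_iff.2 hi) n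
  simp only [card_singleton, Nat.descFactorial_one, singleton_subset_iff] at h
  simpa using congrArg (Nat.cast : ℕ → R) h

theorem card_mul_card_sub_one_mul_card_filter_mem_mem_powersetCard [CommRing R] {t : Finset ι}
    {i j : ι} (hi : i ∈ t) (hj : j ∈ t) (n : ℕ) :
    (#t * (#t - 1) : R) * #{I ∈ t.powersetCard n | i ∈ I ∧ j ∈ I} =
      (#t).choose n * n * ((n - 1) + if i = j then (#t : R) - n else 0) := by
  by_cases hij : i = j
  · subst hij
    simp only [and_self, if_true]
    linear_combination ((#t : R) - 1) * card_mul_card_filter_mem_powersetCard (R := R) hi n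
  · have hsub : {i, j} ⊆ t := insert_subset hi (singleton_subset_iff.2 hj)
    have h := descFactorial_mul_card_filter_powersetCard_subset hsub n
    simp only [card_pair hij, insert_subset_iff, singleton_subset_iff] at h
    have h' := congrArg (Nat.cast : ℕ → R) h
    push_cast [Nat.cast_descFactorial_two] at h'
    rw [if_neg hij, add_zero, h', mul_assoc]

theorem card_mul_sum_powersetCard_sum [CommSemiring R] (t : Finset ι) (n : ℕ) (f : ι → R) :
    (#t : R) * ∑ I ∈ t.powersetCard n, ∑ i ∈ I, f i = (#t).choose n * n * ∑ i ∈ t, f i := by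
  rw [sum_sum_eq_sum_sum_filter_mem (fun I hI => (mem_powersetCard.1 hI).1), mul_sum, mul_sum]
  refine sum_congr rfl fun i hi => ?_
  rw [sum_const, nsmul_eq_mul, ← mul_assoc, card_mul_card_filter_mem_powersetCard hi]

theorem card_mul_card_sub_one_mul_sum_powersetCard_sum_sq [CommRing R] (t : Finset ι) (n : ℕ)
    (f : ι → R) :
    (#t * (#t - 1) : R) * ∑ I ∈ t.powersetCard n, (∑ i ∈ I, f i) ^ 2 =
      (#t).choose n * n * ((n - 1) * (∑ i ∈ t, f i) ^ 2 + (#t - n) * ∑ i ∈ t, f i ^ 2) := by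
  have hsub : ∀ I ∈ t.powersetCard n, I ⊆ t := fun I hI => (mem_powersetCard.1 hI).1
  calc (#t * (#t - 1) : R) * ∑ I ∈ t.powersetCard n, (∑ i ∈ I, f i) ^ 2
      = ∑ i ∈ t, ∑ j ∈ t,
          (#t * (#t - 1) : R) * #{I ∈ t.powersetCard n | i ∈ I ∧ j ∈ I} * (f i * f j) := by
        simp_rw [sq, sum_mul_sum, sum_sum_eq_sum_sum_filter_mem hsub, mul_sum]
        refine sum_congr rfl fun i _ => ?_
        rw [sum_sum_eq_sum_sum_filter_mem fun I hI => hsub I (mem_filter.1 hI).1]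
        simp_rw [filter_filter, sum_const, nsmul_eq_mul]
        exact sum_congr rfl fun j _ => by ring
    _ = (#t).choose n * n * ((n - 1) * (∑ i ∈ t, f i) ^ 2 + (#t - n) * ∑ i ∈ t, f i ^ 2) := by
        rw [sum_congr rfl fun i hi => sum_congr rfl fun j hj => by
          rw [card_mul_card_sub_one_mul_card_filter_mem_mem_powersetCard hi hj]]
        simp only [mul_add, add_mul, sum_add_distrib, mul_ite, ite_mul, mul_zero, zero_mul,
          sum_ite_eq, sum_ite_mem, inter_self, ← mul_sum, ← sum_mul, sq]
        ring

end Finset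

/-- Variance of the SDGD estimator (sampling `b` of `d ≥ 2` dimensions without replacement):
for `X = (d/b) Σ_{i∈I} c_i` with `I` uniform over `b`-element subsets of `{1,…,d}`,
`Var(X) = (d²/b)·((d−b)/(d−1))·s²` where `s²` is the population variance of the values
`c_i`; in particular `Var(X)` vanishes when `b = d` or when all the `c_i` are equal. -/
theorem sdgd_variance {d b : ℕ} (hd : 2 ≤ d) (hb : 1 ≤ b) (hbd : b ≤ d) (c : Fin d → ℝ) :
    let P := Finset.powersetCard b (Finset.univ : Finset (Fin d))
    let C : ℝ := Nat.choose d b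
    let X : Finset (Fin d) → ℝ := fun I => ((d : ℝ) / (b : ℝ)) * ∑ i ∈ I, c i
    let EX : ℝ := (1 / C) * ∑ I ∈ P, X I
    let Var : ℝ := (1 / C) * (∑ I ∈ P, (X I) ^ 2) - EX ^ 2
    let cbar : ℝ := (1 / (d : ℝ)) * ∑ i, c i
    let s2 : ℝ := (1 / (d : ℝ)) * ∑ i, (c i - cbar) ^ 2
    Var = ((d : ℝ) ^ 2 / (b : ℝ)) * (((d : ℝ) - (b : ℝ)) / ((d : ℝ) - 1)) * s2 ∧
    (b = d → Var = 0) ∧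
    ((∀ i j, c i = c j) → Var = 0) := by
  intro P C X EX Var cbar s2
  have hd0 : (d : ℝ) ≠ 0 := by exact_mod_cast (by omega : d ≠ 0)
  have hd1 : (d : ℝ) - 1 ≠ 0 := by
    have : (2 : ℝ) ≤ d := by exact_mod_cast hd
    linarith
  have hb0 : (b : ℝ) ≠ 0 := by exact_mod_cast (by omega : b ≠ 0)
  have hC : C ≠ 0 := Nat.cast_ne_zero.2 (Nat.choose_pos hbd).ne'
  have first := card_mul_sum_powersetCard_sum (univ : Finset (Fin d)) b c
  have second := card_mul_card_sub_one_mul_sum_powersetCard_sum_sq (univ : Finset (Fin d)) b c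
  have spread := sum_sub_mean_sq univ c
  simp only [card_univ, Fintype.card_fin] at first second spread
  have hs2 : s2 = (∑ i, c i ^ 2 - (∑ i, c i) ^ 2 / d) / d := by
    simp only [s2, cbar, one_div_mul_eq_div, spread]
  have hVar : Var = (d / b) ^ 2 *
      ((∑ I ∈ P, (∑ i ∈ I, c i) ^ 2) / C - ((∑ I ∈ P, ∑ i ∈ I, c i) / C) ^ 2) := by
    simp only [Var, EX, X, mul_pow, ← mul_sum]
    ring
  have key : Var = ((d : ℝ) ^ 2 / (b : ℝ)) * (((d : ℝ) - (b : ℝ)) / ((d : ℝ) - 1)) * s2 := by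
    rw [hVar, hs2, eq_div_of_mul_eq hd0 ((mul_comm _ _).trans first),
      eq_div_of_mul_eq (mul_ne_zero hd0 hd1) ((mul_comm _ _).trans second)]
    field_simp
    ring
  refine ⟨key, fun hbd_eq => by simp [key, hbd_eq], fun hc => ?_⟩
  have hcbar : ∀ i, c i - cbar = 0 := fun i => by
    simp only [cbar, sum_congr rfl fun j _ => hc j i, sum_const, card_univ, Fintype.card_fin,
      nsmul_eq_mul]
    field_simp
    ring
  simp [key, s2, hcbar]
end

section
/- Let d ≥ 1, σ > 0, let γ be the Gaussian measure N(0, σ² I_d) on ℝ^d (the d-fold product of the centered Gaussian measure of variance σ² on ℝ), and let f : ℝ^d → ℝ be bounded and measurable. Define u(x) := ∫ f(x + δ) dγ(δ). Then u is differentiable at every x ∈ ℝ^d and its gradient is given by the randomized-smoothing (Stein) identity ∇u(x) = (1/σ²) ∫ δ f(x + δ) dγ(δ). -/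
/-!
With `G` the product Gaussian density, `γ = G(δ) dδ`, so `u(x) = ∫ f(y) G(y - x) dy` and the
dependence on `x` sits entirely in the smooth kernel. Since `∂ᵢG(z) = -(zᵢ/σ²) G(z)`,
differentiating under the integral sign gives `∂ᵢu(x) = σ⁻² ∫ f(y) (y - x)ᵢ G(y - x) dy`, which is
the claimed identity after shifting back. Differentiation under the integral is justified because
`f` is bounded and, for `x'` within distance `1` of `x`, `‖DG(y - x')‖` is bounded by a multiple
of the Gaussian density of variance `4σ²` at `y - x`.
-/

open MeasureTheory ProbabilityTheory
open scoped ENNReal NNReal Topology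

theorem Finset.sum_le_prod_one_add {ι R : Type*} [CommSemiring R] [PartialOrder R]
    [IsOrderedRing R] (s : Finset ι) {a : ι → R} (ha : ∀ i ∈ s, 0 ≤ a i) :
    ∑ i ∈ s, a i ≤ ∏ i ∈ s, (1 + a i) := by
  classical
  induction s using Finset.induction_on with
  | empty => simp
  | insert j s hj ih =>
    rw [Finset.sum_insert hj, Finset.prod_insert hj]
    have hs : ∀ i ∈ s, 0 ≤ a i := fun i hi ↦ ha i (Finset.mem_insert_of_mem hi)
    have hprod : 1 ≤ ∏ i ∈ s, (1 + a i) :=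
      Finset.one_le_prod fun i hi ↦ le_add_of_nonneg_right (hs i hi)
    calc a j + ∑ i ∈ s, a i ≤ a j * ∏ i ∈ s, (1 + a i) + ∏ i ∈ s, (1 + a i) :=
          add_le_add (le_mul_of_one_le_right (ha j (Finset.mem_insert_self j s)) hprod) (ih hs)
      _ = (1 + a j) * ∏ i ∈ s, (1 + a i) := by ring

namespace MeasureTheory

variable {α : Type*} [MeasurableSpace α]

theorem lintegral_fin_nat_prod_eq_prod {n : ℕ} {μ : Fin n → Measure α} [∀ i, SigmaFinite (μ i)]
    (f : Fin n → α → ℝ≥0∞) (hf : ∀ i, Measurable (f i)) :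
    ∫⁻ x, ∏ i, f i (x i) ∂Measure.pi μ = ∏ i, ∫⁻ x, f i x ∂μ i := by
  induction n with
  | zero => simp
  | succ n ih =>
    calc _ = ∫⁻ x : α × (Fin n → α), f 0 x.1 * ∏ i : Fin n, f i.succ (x.2 i)
          ∂(μ 0).prod (Measure.pi fun i ↦ μ i.succ) := by
          rw [← (measurePreserving_piFinSuccAbove μ 0).symm.lintegral_comp_emb
            (MeasurableEquiv.measurableEmbedding _)]
          simp_rw [MeasurableEquiv.piFinSuccAbove_symm_apply, Fin.insertNthEquiv,
            Fin.prod_univ_succ, Fin.insertNth_zero, Equiv.coe_fn_mk, Fin.cons_succ,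
            Fin.zero_succAbove, cast_eq, Fin.cons_zero]
      _ = (∫⁻ x, f 0 x ∂μ 0) * ∏ i : Fin n, ∫⁻ x, f i.succ x ∂μ i.succ := by
          rw [lintegral_prod_mul (μ := μ 0) (ν := Measure.pi fun i ↦ μ i.succ) (f := f 0)
            (g := fun y ↦ ∏ i : Fin n, f i.succ (y i)) (hf 0).aemeasurable
            (Finset.measurable_prod _ fun i _ ↦ by fun_prop).aemeasurable,
            ih _ fun i ↦ hf i.succ]
      _ = _ := (Fin.prod_univ_succ fun i ↦ ∫⁻ x, f i x ∂μ i).symm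

theorem lintegral_fintype_prod_eq_prod {ι : Type*} [Fintype ι] {μ : ι → Measure α}
    [∀ i, SigmaFinite (μ i)] (f : ι → α → ℝ≥0∞) (hf : ∀ i, Measurable (f i)) :
    ∫⁻ x, ∏ i, f i (x i) ∂Measure.pi μ = ∏ i, ∫⁻ x, f i x ∂μ i := by
  let e := (Fintype.equivFin ι).symm
  rw [← (measurePreserving_piCongrLeft _ e).lintegral_comp_emb
    (MeasurableEquiv.measurableEmbedding _)]
  simp_rw [← e.prod_comp, MeasurableEquiv.coe_piCongrLeft, Equiv.piCongrLeft_apply_apply]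
  exact lintegral_fin_nat_prod_eq_prod _ fun i ↦ hf (e i)

theorem Measure.pi_withDensity {ι : Type*} [Fintype ι] {μ : ι → Measure α}
    [∀ i, SigmaFinite (μ i)] {ρ : ι → α → ℝ≥0∞} (hρ : ∀ i, Measurable (ρ i))
    [∀ i, SigmaFinite ((μ i).withDensity (ρ i))] :
    Measure.pi (fun i ↦ (μ i).withDensity (ρ i)) =
      (Measure.pi μ).withDensity fun x ↦ ∏ i, ρ i (x i) := by
  refine Measure.pi_eq fun s hs ↦ ?_
  have hbox := MeasurableSet.univ_pi hs
  rw [withDensity_apply _ hbox, ← lintegral_indicator hbox]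
  simp_rw [withDensity_apply _ (hs _), ← lintegral_indicator (hs _)]
  rw [← lintegral_fintype_prod_eq_prod _ fun i ↦ (hρ i).indicator (hs i)]
  congr with x
  classical
  simp only [Set.indicator_apply, Finset.prod_ite_zero, Set.mem_univ_pi, Finset.mem_univ,
    forall_const]

end MeasureTheory

section SmoothKernel

variable {E : Type*} [NormedAddCommGroup E] [NormedSpace ℝ E] [SecondCountableTopology E]
  [MeasurableSpace E] [OpensMeasurableSpace E] {μ : Measure E} {f K B : E → ℝ} {M : ℝ} {x : E}

theorem integrable_smul_fderiv_comp_sub (hf : AEStronglyMeasurable f μ) (hfM : ∀ y, ‖f y‖ ≤ M)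
    (hK : ContDiff ℝ 1 K) (hB : Integrable B μ) (hKB : ∀ y, ‖fderiv ℝ K (y - x)‖ ≤ B y) :
    Integrable (fun y ↦ f y • fderiv ℝ K (y - x)) μ := by
  refine (hB.const_mul M).mono' (hf.smul ?_) (.of_forall fun y ↦ ?_)
  · exact ((hK.continuous_fderiv one_ne_zero).comp (continuous_sub_right x)).aestronglyMeasurable
  · rw [norm_smul]
    exact mul_le_mul (hfM y) (hKB y) (norm_nonneg _) ((norm_nonneg _).trans (hfM y))

theorem hasFDerivAt_integral_mul_comp_sub (hf : AEStronglyMeasurable f μ) (hfM : ∀ y, ‖f y‖ ≤ M)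
    (hK : ContDiff ℝ 1 K) (hKint : Integrable (fun y ↦ K (y - x)) μ) (hB : Integrable B μ)
    (hKB : ∀ᶠ x' in 𝓝 x, ∀ y, ‖fderiv ℝ K (y - x')‖ ≤ B y) :
    HasFDerivAt (fun x' ↦ ∫ y, f y * K (y - x') ∂μ) (-∫ y, f y • fderiv ℝ K (y - x) ∂μ) x := by
  rw [← integral_neg]
  refine hasFDerivAt_integral_of_dominated_of_fderiv_le
    (F' := fun x' y ↦ -(f y • fderiv ℝ K (y - x'))) (bound := fun y ↦ M * B y) hKB
    (.of_forall fun x' ↦ hf.mul (hK.continuous.comp (continuous_sub_right x')).aestronglyMeasurable)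
    (hKint.bdd_mul hf (.of_forall hfM))
    (integrable_smul_fderiv_comp_sub hf hfM hK hB hKB.self_of_nhds).neg.aestronglyMeasurable
    (.of_forall fun y x' hx' ↦ ?_) (hB.const_mul M) (.of_forall fun y x' _ ↦ ?_)
  · rw [norm_neg, norm_smul]
    exact mul_le_mul (hfM y) (hx' y) (norm_nonneg _) ((norm_nonneg _).trans (hfM y))
  · have hsub : HasFDerivAt (fun w ↦ y - w) (-ContinuousLinearMap.id ℝ E) x' :=
      (hasFDerivAt_id x').const_sub y
    refine (((hK.differentiable one_ne_zero (y - x')).hasFDerivAt.comp x' hsub).const_mul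
      (f y)).congr_fderiv ?_
    ext w
    simp

end SmoothKernel

theorem one_add_abs_le_mul_exp_sq_div {a : ℝ} (ha : 0 < a) (s : ℝ) :
    1 + |s| ≤ (1 + a) * Real.exp (s ^ 2 / (4 * a)) := by
  have ht : 0 ≤ s ^ 2 / (4 * a) := by positivity
  have hamgm : |s| - a ≤ s ^ 2 / (4 * a) := by
    rw [le_div_iff₀ (by positivity)]
    nlinarith [sq_nonneg (2 * a - |s|), sq_abs s]
  calc 1 + |s| ≤ (1 + a) * (s ^ 2 / (4 * a) + 1) := by nlinarith [mul_nonneg ha.le ht]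
    _ ≤ _ := by gcongr; exact Real.add_one_le_exp _

theorem exp_neg_sq_div_le_of_abs_sub_le {a : ℝ} (ha : 0 < a) {s w : ℝ} (hsw : |s - w| ≤ 1) :
    Real.exp (-s ^ 2 / (4 * a)) ≤ Real.exp (1 / (4 * a)) * Real.exp (-w ^ 2 / (2 * (4 * a))) := by
  have hw : |w| ≤ |s| + 1 := by linarith [abs_sub_abs_le_abs_sub w s, abs_sub_comm s w]
  have hw2 : w ^ 2 ≤ 2 * s ^ 2 + 2 := by
    nlinarith [sq_abs w, sq_abs s, abs_nonneg w, sq_nonneg (|s| - 1)]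
  rw [← Real.exp_add, Real.exp_le_exp, ← sub_nonneg]
  have : 1 / (4 * a) + -w ^ 2 / (2 * (4 * a)) - -s ^ 2 / (4 * a) =
      (2 * s ^ 2 + 2 - w ^ 2) / (8 * a) := by
    field_simp
    ring
  rw [this]
  exact div_nonneg (by linarith) (by positivity)

namespace ProbabilityTheory

theorem hasDerivAt_gaussianPDFReal (μ : ℝ) (v : ℝ≥0) (t : ℝ) :
    HasDerivAt (gaussianPDFReal μ v) (-((t - μ) / v) * gaussianPDFReal μ v t) t := by
  have h : HasDerivAt (fun x ↦ -(x - μ) ^ 2 / (2 * v)) (-((t - μ) / v)) t :=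
    (((hasDerivAt_id' t).sub_const μ).fun_pow 2).fun_neg.div_const (2 * (v : ℝ)) |>.congr_deriv
      (by ring)
  rw [gaussianPDFReal_def]
  exact (h.exp.const_mul _).congr_deriv (by ring)

/-- Split `exp (-s²/2v) = exp (-s²/4v) ^ 2`: one factor absorbs the weight `1 + |s|`, the other
is controlled at the nearby point `w`. -/
theorem one_add_abs_mul_gaussianPDFReal_le {v : ℝ≥0} (hv : v ≠ 0) :
    ∃ C, ∀ s w : ℝ, |s - w| ≤ 1 →
      (1 + |s|) * gaussianPDFReal 0 v s ≤ C * gaussianPDFReal 0 (4 * v) w := by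
  have ha : (0 : ℝ) < v := by positivity
  refine ⟨(1 + v) * Real.exp (1 / (4 * v)) * (√(2 * Real.pi * (4 * v)) / √(2 * Real.pi * v)),
    fun s w hsw ↦ ?_⟩
  have hsplit : Real.exp (s ^ 2 / (4 * v)) * Real.exp (-(s - 0) ^ 2 / (2 * v)) =
      Real.exp (-s ^ 2 / (4 * v)) := by
    rw [← Real.exp_add]
    congr 1
    field_simp
    ring
  have hc : 0 < √(2 * Real.pi * v) := by positivity
  have hc4 : 0 < √(2 * Real.pi * (4 * v)) := by positivity
  simp only [gaussianPDFReal_def, NNReal.coe_mul, NNReal.coe_ofNat]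
  calc (1 + |s|) * ((√(2 * Real.pi * v))⁻¹ * Real.exp (-(s - 0) ^ 2 / (2 * v)))
      ≤ (1 + v) * Real.exp (s ^ 2 / (4 * v)) *
          ((√(2 * Real.pi * v))⁻¹ * Real.exp (-(s - 0) ^ 2 / (2 * v))) := by
        gcongr
        exact one_add_abs_le_mul_exp_sq_div ha s
    _ = (1 + v) * (√(2 * Real.pi * v))⁻¹ * Real.exp (-s ^ 2 / (4 * v)) := by
      rw [← hsplit]
      ring
    _ ≤ (1 + v) * (√(2 * Real.pi * v))⁻¹ *
          (Real.exp (1 / (4 * v)) * Real.exp (-w ^ 2 / (2 * (4 * v)))) := by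
      gcongr
      exact exp_neg_sq_div_le_of_abs_sub_le ha hsw
    _ = _ := by
      rw [sub_zero]
      field_simp

variable {ι : Type*} [Fintype ι] {v : ℝ≥0}

noncomputable def gaussianPDFRealPi (v : ℝ≥0) (z : ι → ℝ) : ℝ := ∏ i, gaussianPDFReal 0 v (z i)

theorem gaussianPDFRealPi_nonneg (v : ℝ≥0) (z : ι → ℝ) : 0 ≤ gaussianPDFRealPi v z :=
  Finset.prod_nonneg fun _ _ ↦ gaussianPDFReal_nonneg _ _ _

theorem integrable_gaussianPDFRealPi (v : ℝ≥0) : Integrable (gaussianPDFRealPi (ι := ι) v) :=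
  Integrable.fintype_prod fun _ ↦ integrable_gaussianPDFReal 0 v

theorem contDiff_gaussianPDFRealPi (v : ℝ≥0) : ContDiff ℝ ⊤ (gaussianPDFRealPi (ι := ι) v) := by
  unfold gaussianPDFRealPi gaussianPDFReal
  fun_prop

theorem pi_gaussianReal_eq_withDensity (hv : v ≠ 0) :
    Measure.pi (fun _ : ι ↦ gaussianReal 0 v) =
      volume.withDensity fun z ↦ ENNReal.ofReal (gaussianPDFRealPi v z) := by
  have : SigmaFinite (volume.withDensity (gaussianPDF 0 v)) := by
    rw [← gaussianReal_of_var_ne_zero 0 hv]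
    infer_instance
  simp_rw [gaussianReal_of_var_ne_zero 0 hv]
  rw [Measure.pi_withDensity fun _ ↦ measurable_gaussianPDF 0 v, ← volume_pi]
  congr with z
  rw [gaussianPDFRealPi, ENNReal.ofReal_prod_of_nonneg fun i _ ↦ gaussianPDFReal_nonneg _ _ _]
  rfl

theorem integral_pi_gaussianReal_eq_integral_comp_sub (hv : v ≠ 0) (h : (ι → ℝ) → ℝ)
    (x : ι → ℝ) : ∫ z, h z ∂Measure.pi (fun _ ↦ gaussianReal 0 v) =
      ∫ y, gaussianPDFRealPi v (y - x) * h (y - x) := by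
  rw [pi_gaussianReal_eq_withDensity hv, integral_withDensity_eq_integral_toReal_smul
    (contDiff_gaussianPDFRealPi v).continuous.measurable.ennreal_ofReal
    (.of_forall fun _ ↦ ENNReal.ofReal_lt_top)]
  simp_rw [ENNReal.toReal_ofReal (gaussianPDFRealPi_nonneg v _), smul_eq_mul]
  exact (integral_sub_right_eq_self _ x).symm

theorem hasFDerivAt_gaussianPDFRealPi (v : ℝ≥0) (z : ι → ℝ) :
    HasFDerivAt (gaussianPDFRealPi v)
      (∑ i, (-(z i / v) * gaussianPDFRealPi v z) • (ContinuousLinearMap.proj i : (ι → ℝ) →L[ℝ] ℝ))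
      z := by
  classical
  have h := HasFDerivAt.finsetProd (u := Finset.univ)
    (g := fun i (x : ι → ℝ) ↦ gaussianPDFReal 0 v (x i)) fun i _ ↦
    (hasDerivAt_gaussianPDFReal 0 v (z i)).comp_hasFDerivAt (f := fun x : ι → ℝ ↦ x i) z
      (hasFDerivAt_apply (𝕜 := ℝ) i z)
  refine h.congr_fderiv (Finset.sum_congr rfl fun i _ ↦ ?_)
  ext w
  simp [gaussianPDFRealPi, ← Finset.mul_prod_erase _ _ (Finset.mem_univ i)]
  ring

theorem fderiv_gaussianPDFRealPi_apply_single [DecidableEq ι] (v : ℝ≥0) (z : ι → ℝ) (i : ι) :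
    fderiv ℝ (gaussianPDFRealPi v) z (Pi.single i 1) = -(z i / v) * gaussianPDFRealPi v z := by
  rw [(hasFDerivAt_gaussianPDFRealPi v z).fderiv, sum_apply,
    Finset.sum_eq_single i (fun j _ hj ↦ by simp [Pi.single_eq_of_ne hj]) (by simp)]
  simp

theorem norm_fderiv_gaussianPDFRealPi_le (v : ℝ≥0) (z : ι → ℝ) :
    ‖fderiv ℝ (gaussianPDFRealPi v) z‖ ≤ (∑ i, |z i|) * gaussianPDFRealPi v z / v := by
  have hG := gaussianPDFRealPi_nonneg v z
  rw [(hasFDerivAt_gaussianPDFRealPi v z).fderiv]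
  refine ContinuousLinearMap.opNorm_le_bound _ (by positivity) fun h ↦ ?_
  rw [sum_apply]
  refine (norm_sum_le _ _).trans ?_
  rw [Finset.sum_mul, Finset.sum_div, Finset.sum_mul]
  gcongr with i
  have hi : ‖h i‖ ≤ ‖h‖ := norm_le_pi_norm h i
  simp only [smul_apply, ContinuousLinearMap.proj_apply, norm_smul, norm_mul, norm_neg, norm_div,
    Real.norm_eq_abs, NNReal.abs_eq, abs_of_nonneg (gaussianPDFRealPi_nonneg v z)] at hi ⊢
  calc _ = |z i| * gaussianPDFRealPi v z / v * |h i| := by ring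
    _ ≤ _ := by gcongr

theorem sum_abs_mul_gaussianPDFRealPi_le (hv : v ≠ 0) :
    ∃ C, ∀ z w : ι → ℝ, dist z w ≤ 1 →
      (∑ i, |z i|) * gaussianPDFRealPi v z ≤ C * gaussianPDFRealPi (4 * v) w := by
  obtain ⟨C, hC⟩ := one_add_abs_mul_gaussianPDFReal_le hv
  refine ⟨C ^ Fintype.card ι, fun z w hzw ↦ ?_⟩
  calc (∑ i, |z i|) * gaussianPDFRealPi v z
      ≤ (∏ i, (1 + |z i|)) * gaussianPDFRealPi v z := by
        gcongr
        · exact gaussianPDFRealPi_nonneg v z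
        · exact Finset.sum_le_prod_one_add _ fun i _ ↦ abs_nonneg (z i)
    _ = ∏ i, (1 + |z i|) * gaussianPDFReal 0 v (z i) := Finset.prod_mul_distrib.symm
    _ ≤ ∏ i, C * gaussianPDFReal 0 (4 * v) (w i) :=
        Finset.prod_le_prod
          (fun i _ ↦ mul_nonneg (by positivity) (gaussianPDFReal_nonneg 0 v (z i)))
          fun i _ ↦ hC _ _ ((Real.dist_eq _ _).symm.trans_le ((dist_le_pi_dist z w i).trans hzw))
    _ = C ^ Fintype.card ι * gaussianPDFRealPi (4 * v) w := by
        rw [Finset.prod_mul_distrib, Finset.prod_const, Finset.card_univ, gaussianPDFRealPi]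

theorem exists_integrable_bound_fderiv_gaussianPDFRealPi (hv : v ≠ 0) (x : ι → ℝ) :
    ∃ B : (ι → ℝ) → ℝ, Integrable B ∧
      ∀ᶠ x' : ι → ℝ in 𝓝 x, ∀ y : ι → ℝ, ‖fderiv ℝ (gaussianPDFRealPi v) (y - x')‖ ≤ B y := by
  obtain ⟨C, hC⟩ := sum_abs_mul_gaussianPDFRealPi_le (ι := ι) hv
  refine ⟨fun y ↦ C * gaussianPDFRealPi (4 * v) (y - x) / v,
    (((integrable_gaussianPDFRealPi _).comp_sub_right x).const_mul C).div_const _, ?_⟩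
  filter_upwards [Metric.closedBall_mem_nhds x one_pos] with x' hx' y
  exact (norm_fderiv_gaussianPDFRealPi_le v _).trans <| div_le_div_of_nonneg_right
    (hC (y - x') (y - x) (by rw [dist_sub_left]; exact hx')) v.2

end ProbabilityTheory

theorem randomized_smoothing_gradient_general {d : ℕ} (σ : ℝ) (hσ : 0 < σ)
    (f : (Fin d → ℝ) → ℝ) (hfm : Measurable f) (M : ℝ) (hfb : ∀ y, |f y| ≤ M) :
    let γ : Measure (Fin d → ℝ) :=
      Measure.pi fun _ : Fin d => gaussianReal 0 ⟨σ ^ 2, sq_nonneg σ⟩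
    let u : (Fin d → ℝ) → ℝ := fun x => ∫ δ, f (x + δ) ∂γ
    ∀ x : Fin d → ℝ,
      DifferentiableAt ℝ u x ∧
      ∀ i : Fin d,
        fderiv ℝ u x (Pi.single i 1) = (1 / σ ^ 2) * ∫ δ, δ i * f (x + δ) ∂γ := by
  intro γ u x
  set v : ℝ≥0 := ⟨σ ^ 2, sq_nonneg σ⟩
  have hv : v ≠ 0 := ne_of_gt (pow_pos hσ 2)
  have hf : AEStronglyMeasurable f volume := hfm.aestronglyMeasurable
  have hK : ContDiff ℝ 1 (gaussianPDFRealPi (ι := Fin d) v) :=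
    (contDiff_gaussianPDFRealPi v).of_le le_top
  have hu : u = fun x' ↦ ∫ y, f y * gaussianPDFRealPi v (y - x') := by
    funext x'
    refine (integral_pi_gaussianReal_eq_integral_comp_sub hv _ x').trans ?_
    simp_rw [add_sub_cancel, mul_comm]
  obtain ⟨B, hB, hKB⟩ := exists_integrable_bound_fderiv_gaussianPDFRealPi hv x
  have hderiv := hasFDerivAt_integral_mul_comp_sub hf hfb hK
    ((integrable_gaussianPDFRealPi v).comp_sub_right x) hB hKB
  rw [← hu] at hderiv
  refine ⟨hderiv.differentiableAt, fun i ↦ ?_⟩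
  rw [hderiv.fderiv, neg_apply, ContinuousLinearMap.integral_apply
      (integrable_smul_fderiv_comp_sub hf hfb hK hB hKB.self_of_nhds),
    integral_pi_gaussianReal_eq_integral_comp_sub hv _ x, ← integral_neg, ← integral_const_mul]
  congr with y
  rw [smul_apply, smul_eq_mul, fderiv_gaussianPDFRealPi_apply_single, add_sub_cancel,
    show (v : ℝ) = σ ^ 2 from rfl]
  ring

/-- Randomized-smoothing (Stein) gradient identity: for `γ = N(0, σ²I_d)` and bounded
measurable `f`, the Gaussian smoothing `u(x) = ∫ f(x+δ) dγ(δ)` is differentiable at every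
`x`, with partial derivatives `∂_i u(x) = (1/σ²) ∫ δ_i f(x+δ) dγ(δ)`. -/
theorem randomized_smoothing_gradient {d : ℕ} (hd : 1 ≤ d) (σ : ℝ) (hσ : 0 < σ)
    (f : (Fin d → ℝ) → ℝ) (hfm : Measurable f) (M : ℝ) (hfb : ∀ y, |f y| ≤ M) :
    let γ : Measure (Fin d → ℝ) :=
      Measure.pi fun _ : Fin d => gaussianReal 0 ⟨σ ^ 2, sq_nonneg σ⟩
    let u : (Fin d → ℝ) → ℝ := fun x => ∫ δ, f (x + δ) ∂γ
    ∀ x : Fin d → ℝ,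
      DifferentiableAt ℝ u x ∧
      ∀ i : Fin d,
        fderiv ℝ u x (Pi.single i 1) = (1 / σ ^ 2) * ∫ δ, δ i * f (x + δ) ∂γ :=
  randomized_smoothing_gradient_general σ hσ f hfm M hfb
end
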